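/- arXiv:2405.17689 — 3 statements merged into one kernel-verified Lean document; each statement's English description precedes it below -/
import Mathlib

section
/- Let R be a commutative ring and let a : F → F̃ be a quasi-isomorphism of ℕ-indexed chain complexes of finite free R-modules. Let b : F̃ → F be a homotopy inverse of a and let s : F̃₀ → F̃₁ be an R-linear map satisfying d̃₁ ∘ s = id_{F̃₀} − a₀ ∘ b₀. Define G to be the complex ⋯ → F₃ →(d₃)→ F₂ →(x ↦ (d₂x, 0))→ F₁ ⊕ F̃₀ → 0 and G̃ to be the complex ⋯ → F̃₃ →(d̃₃)→ F̃₂ →(x ↦ (0, d̃₂x))→ F₀ ⊕ F̃₁ → 0. Then the chain map G → G̃ given in degrees i ≥ 1 by a_{i+1} : F_{i+1} → F̃_{i+1} and in degree 0 by A(u, v) = (d₁u − b₀v, a₁u + sv) : F₁ ⊕ F̃₀ → F₀ ⊕ F̃₁ is a quasi-isomorphism. -/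
open CategoryTheory

section Aux

variable {R : Type} [CommRing R]

/-- The terms of the modified complex: degree `0` is replaced by `P`, while degree `n+1`
is `F_{n+2}`. -/
noncomputable def auxX (F : ChainComplex (ModuleCat.{0} R) ℕ) (P : ModuleCat.{0} R) :
    ℕ → ModuleCat.{0} R
  | 0 => P
  | (n + 1) => F.X (n + 2)

/-- The differentials of the modified complex: in lowest degree we use `δ : F₂ ⟶ P`,
and above that the differentials of `F`. -/
noncomputable def auxD (F : ChainComplex (ModuleCat.{0} R) ℕ) (P : ModuleCat.{0} R)
    (δ : F.X 2 ⟶ P) : ∀ n : ℕ, auxX F P (n + 1) ⟶ auxX F P n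
  | 0 => δ
  | (n + 1) => F.d (n + 3) (n + 2)

lemma auxSq (F : ChainComplex (ModuleCat.{0} R) ℕ) (P : ModuleCat.{0} R) (δ : F.X 2 ⟶ P)
    (hδ : F.d 3 2 ≫ δ = 0) : ∀ n : ℕ, auxD F P δ (n + 1) ≫ auxD F P δ n = 0
  | 0 => hδ
  | (n + 1) => F.d_comp_d _ _ _

variable (F Ft : ChainComplex (ModuleCat.{0} R) ℕ)

/-- `δ_G : F₂ ⟶ F₁ ⊕ F̃₀`, `x ↦ (d₂ x, 0)`. -/
noncomputable def deltaG : F.X 2 ⟶ ModuleCat.of R (F.X 1 × Ft.X 0) :=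
  ModuleCat.ofHom (LinearMap.prod ((F.d 2 1).hom : F.X 2 →ₗ[R] F.X 1) 0)

/-- `δ_G̃ : F̃₂ ⟶ F₀ ⊕ F̃₁`, `x ↦ (0, d̃₂ x)`. -/
noncomputable def deltaGt : Ft.X 2 ⟶ ModuleCat.of R (F.X 0 × Ft.X 1) :=
  ModuleCat.ofHom (LinearMap.prod 0 ((Ft.d 2 1).hom : Ft.X 2 →ₗ[R] Ft.X 1))

lemma deltaG_sq : F.d 3 2 ≫ deltaG F Ft = 0 := by
  apply ModuleCat.hom_ext
  show (LinearMap.prod ((F.d 2 1).hom : F.X 2 →ₗ[R] F.X 1) 0).comp ((F.d 3 2).hom : F.X 3 →ₗ[R] F.X 2)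
      = (0 : F.X 3 →ₗ[R] (F.X 1 × Ft.X 0))
  apply LinearMap.ext; intro x
  have h1 : ((F.d 2 1).hom : F.X 2 →ₗ[R] F.X 1) (((F.d 3 2).hom : F.X 3 →ₗ[R] F.X 2) x) = 0 :=
    LinearMap.congr_fun
      (show ((F.d 2 1).hom : F.X 2 →ₗ[R] F.X 1).comp ((F.d 3 2).hom : F.X 3 →ₗ[R] F.X 2) = 0 from
        congrArg ModuleCat.Hom.hom (F.d_comp_d 3 2 1)) x
  simp [h1]

lemma deltaGt_sq : Ft.d 3 2 ≫ deltaGt F Ft = 0 := by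
  apply ModuleCat.hom_ext
  show (LinearMap.prod 0 ((Ft.d 2 1).hom : Ft.X 2 →ₗ[R] Ft.X 1)).comp
        ((Ft.d 3 2).hom : Ft.X 3 →ₗ[R] Ft.X 2)
      = (0 : Ft.X 3 →ₗ[R] (F.X 0 × Ft.X 1))
  apply LinearMap.ext; intro x
  have h1 : ((Ft.d 2 1).hom : Ft.X 2 →ₗ[R] Ft.X 1) (((Ft.d 3 2).hom : Ft.X 3 →ₗ[R] Ft.X 2) x) = 0 :=
    LinearMap.congr_fun
      (show ((Ft.d 2 1).hom : Ft.X 2 →ₗ[R] Ft.X 1).comp ((Ft.d 3 2).hom : Ft.X 3 →ₗ[R] Ft.X 2) = 0 from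
        congrArg ModuleCat.Hom.hom (Ft.d_comp_d 3 2 1)) x
  simp [h1]

/-- The complex `G : ⋯ → F₃ → F₂ → F₁ ⊕ F̃₀ → 0`. -/
noncomputable def complexG : ChainComplex (ModuleCat.{0} R) ℕ :=
  ChainComplex.of (auxX F (ModuleCat.of R (F.X 1 × Ft.X 0)))
    (auxD F _ (deltaG F Ft)) (auxSq F _ _ (deltaG_sq F Ft))

/-- The complex `G̃ : ⋯ → F̃₃ → F̃₂ → F₀ ⊕ F̃₁ → 0`. -/
noncomputable def complexGt : ChainComplex (ModuleCat.{0} R) ℕ :=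
  ChainComplex.of (auxX Ft (ModuleCat.of R (F.X 0 × Ft.X 1)))
    (auxD Ft _ (deltaGt F Ft)) (auxSq Ft _ _ (deltaGt_sq F Ft))

variable {F Ft}

/-- The degree-zero component `A : F₁ ⊕ F̃₀ ⟶ F₀ ⊕ F̃₁`,
`(u, v) ↦ (d₁ u - b₀ v, a₁ u + s v)`. -/
noncomputable def mapA (a : F ⟶ Ft) (b : Ft ⟶ F) (s : Ft.X 0 →ₗ[R] Ft.X 1) :
    ModuleCat.of R (F.X 1 × Ft.X 0) ⟶ ModuleCat.of R (F.X 0 × Ft.X 1) :=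
  ModuleCat.ofHom (LinearMap.prod
    (((F.d 1 0).hom : F.X 1 →ₗ[R] F.X 0).comp (LinearMap.fst R (F.X 1) (Ft.X 0))
      - ((b.f 0).hom : Ft.X 0 →ₗ[R] F.X 0).comp (LinearMap.snd R (F.X 1) (Ft.X 0)))
    (((a.f 1).hom : F.X 1 →ₗ[R] Ft.X 1).comp (LinearMap.fst R (F.X 1) (Ft.X 0))
      + s.comp (LinearMap.snd R (F.X 1) (Ft.X 0))))

lemma mapA_comm (a : F ⟶ Ft) (b : Ft ⟶ F) (s : Ft.X 0 →ₗ[R] Ft.X 1) :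
    a.f 2 ≫ deltaGt F Ft = deltaG F Ft ≫ mapA a b s := by
  apply ModuleCat.hom_ext
  show (LinearMap.prod (0 : Ft.X 2 →ₗ[R] F.X 0) ((Ft.d 2 1).hom : Ft.X 2 →ₗ[R] Ft.X 1)).comp
        ((a.f 2).hom : F.X 2 →ₗ[R] Ft.X 2)
      = (LinearMap.prod
          (((F.d 1 0).hom : F.X 1 →ₗ[R] F.X 0).comp (LinearMap.fst R (F.X 1) (Ft.X 0))
            - ((b.f 0).hom : Ft.X 0 →ₗ[R] F.X 0).comp (LinearMap.snd R (F.X 1) (Ft.X 0)))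
          (((a.f 1).hom : F.X 1 →ₗ[R] Ft.X 1).comp (LinearMap.fst R (F.X 1) (Ft.X 0))
            + s.comp (LinearMap.snd R (F.X 1) (Ft.X 0)))).comp
        (LinearMap.prod ((F.d 2 1).hom : F.X 2 →ₗ[R] F.X 1) (0 : F.X 2 →ₗ[R] Ft.X 0))
  apply LinearMap.ext; intro x
  have h1 : ((F.d 1 0).hom : F.X 1 →ₗ[R] F.X 0) (((F.d 2 1).hom : F.X 2 →ₗ[R] F.X 1) x) = 0 :=
    LinearMap.congr_fun
      (show ((F.d 1 0).hom : F.X 1 →ₗ[R] F.X 0).comp ((F.d 2 1).hom : F.X 2 →ₗ[R] F.X 1) = 0 from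
        congrArg ModuleCat.Hom.hom (F.d_comp_d 2 1 0)) x
  have h2 : ((Ft.d 2 1).hom : Ft.X 2 →ₗ[R] Ft.X 1) (((a.f 2).hom : F.X 2 →ₗ[R] Ft.X 2) x)
      = ((a.f 1).hom : F.X 1 →ₗ[R] Ft.X 1) (((F.d 2 1).hom : F.X 2 →ₗ[R] F.X 1) x) :=
    LinearMap.congr_fun
      (show ((Ft.d 2 1).hom : Ft.X 2 →ₗ[R] Ft.X 1).comp ((a.f 2).hom : F.X 2 →ₗ[R] Ft.X 2)
          = ((a.f 1).hom : F.X 1 →ₗ[R] Ft.X 1).comp ((F.d 2 1).hom : F.X 2 →ₗ[R] F.X 1) from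
        congrArg ModuleCat.Hom.hom (a.comm 2 1)) x
  simp [h1, h2]

/-- The chain map `G ⟶ G̃` which is `a_{n+2}` in degree `n+1` and `A` in degree `0`. -/
noncomputable def homGGt (a : F ⟶ Ft) (b : Ft ⟶ F) (s : Ft.X 0 →ₗ[R] Ft.X 1) :
    complexG F Ft ⟶ complexGt F Ft :=
  ChainComplex.ofHom
    (fun n => match n with
      | 0 => mapA a b s
      | (n + 1) => a.f (n + 2))
    (fun n => match n with
      | 0 => by
        simp only [complexG, complexGt, ChainComplex.of_d]
        exact mapA_comm a b s
      | (n + 1) => by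
        simp only [complexG, complexGt, ChainComplex.of_d]
        exact a.comm (n + 3) (n + 2))

end Aux

/-!
Since `b` is a homotopy inverse of `a`, the map `a` is a quasi-isomorphism. In degrees `≥ 2` the
complexes `G`, `G̃` and the chain map are `F`, `F̃` and `a` shifted by one; in degree `1` the
differentials into degree `0` only acquire a zero component, so homology does not change there.

Degree `0` is an argument with elements. If `A(u, v) = (0, d̃₂ t)`, applying `d̃₁` to the second
coordinate and using `d̃₁ s = 1 - a₀ b₀` gives `v = 0`, so `u` is a cycle with `a₁ u` a boundary,
hence a boundary. For surjectivity let `h : F₀ → F₁` and `k : F̃₀ → F̃₁` be the degree-`0` parts of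
the homotopies `a ≫ b ≃ 1` and `b ≫ a ≃ 1`. The element `A(-h w, -a₀ w)` has first coordinate `w`.
Since `d̃₁ s = 1 - a₀ b₀ = -d̃₁ k`, the map `s + k` takes values in cycles, so
`-(s + k)(d̃₁ z) = a₁ c + d̃₂ τ` for a cycle `c`, and then `A(b₁ z + c, d̃₁ z) ≡ (0, z)` modulo
boundaries.
-/

namespace Submodule

variable {R M N : Type*} [Ring R] [AddCommGroup M] [AddCommGroup N] [Module R M] [Module R N]
  {p : Submodule R M} {q : Submodule R N} {f : M →ₗ[R] N} (h : p ≤ q.comap f)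

theorem mapQ_injective_iff : Function.Injective (p.mapQ q f h) ↔ ∀ x, f x ∈ q → x ∈ p := by
  rw [← LinearMap.ker_eq_bot, ker_mapQ, eq_bot_iff, map_le_iff_le_comap, comap_bot, ker_mkQ]
  rfl

theorem mapQ_surjective_iff :
    Function.Surjective (p.mapQ q f h) ↔ ∀ y, ∃ x, ∃ z ∈ q, f x + z = y := by
  rw [← LinearMap.range_eq_top, range_mapQ, map_mkQ_eq_top, sup_comm, eq_top_iff]
  simp only [SetLike.le_def, mem_top, true_implies, mem_sup, LinearMap.mem_range,
    exists_exists_eq_and]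

end Submodule

namespace CategoryTheory.ShortComplex

variable {R : Type*} [Ring R] {S₁ S₂ : ShortComplex (ModuleCat R)} (φ : S₁ ⟶ S₂)

theorem moduleCat_comm₁₂_apply (x : S₁.X₁) : S₂.f (φ.τ₁ x) = φ.τ₂ (S₁.f x) := by
  simpa using ConcreteCategory.congr_hom φ.comm₁₂ x

theorem moduleCat_comm₂₃_apply (x : S₁.X₂) : S₂.g (φ.τ₂ x) = φ.τ₃ (S₁.g x) := by
  simpa using ConcreteCategory.congr_hom φ.comm₂₃ x

theorem moduleCat_τ₂_mem_ker {x : S₁.X₂} (hx : S₁.g x = 0) : S₂.g (φ.τ₂ x) = 0 := by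
  rw [moduleCat_comm₂₃_apply, hx, map_zero]

noncomputable def moduleCatCyclesMap : LinearMap.ker S₁.g.hom →ₗ[R] LinearMap.ker S₂.g.hom :=
  φ.τ₂.hom.restrict fun _ => moduleCat_τ₂_mem_ker φ

theorem moduleCatCyclesMap_mem_range {x : LinearMap.ker S₁.g.hom}
    (hx : x ∈ LinearMap.range S₁.moduleCatToCycles) :
    moduleCatCyclesMap φ x ∈ LinearMap.range S₂.moduleCatToCycles := by
  obtain ⟨y, rfl⟩ := hx
  exact ⟨φ.τ₁ y, Subtype.ext (moduleCat_comm₁₂_apply φ y)⟩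

noncomputable def moduleCatLeftHomologyMapData :
    LeftHomologyMapData φ S₁.moduleCatLeftHomologyData S₂.moduleCatLeftHomologyData where
  φK := ModuleCat.ofHom (moduleCatCyclesMap φ)
  φH := ModuleCat.ofHom (Submodule.mapQ _ _ (moduleCatCyclesMap φ)
    fun _ => moduleCatCyclesMap_mem_range φ)
  commi := rfl
  commf' := by
    ext y
    exact Subtype.ext (moduleCat_comm₁₂_apply φ y).symm
  commπ := rfl

theorem moduleCat_mem_range_toCycles_iff {S : ShortComplex (ModuleCat R)}
    (x : LinearMap.ker S.g.hom) :
    x ∈ LinearMap.range S.moduleCatToCycles ↔ ∃ y, S.f y = x := by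
  simp only [LinearMap.mem_range, Subtype.ext_iff]
  rfl

theorem quasiIso_iff_moduleCat : QuasiIso φ ↔
    (∀ x₂, S₁.g x₂ = 0 → (∃ y₁, S₂.f y₁ = φ.τ₂ x₂) → ∃ x₁, S₁.f x₁ = x₂) ∧
      ∀ y₂, S₂.g y₂ = 0 → ∃ x₂, S₁.g x₂ = 0 ∧ ∃ y₁, φ.τ₂ x₂ + S₂.f y₁ = y₂ := by
  rw [(moduleCatLeftHomologyMapData φ).quasiIso_iff, ConcreteCategory.isIso_iff_bijective]
  have hrange := fun x => moduleCatCyclesMap_mem_range φ (x := x)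
  refine and_congr ((Submodule.mapQ_injective_iff hrange).trans ?_)
    ((Submodule.mapQ_surjective_iff hrange).trans ?_)
  · simp only [moduleCat_mem_range_toCycles_iff, Subtype.forall, LinearMap.mem_ker]
    rfl
  · simp only [moduleCat_mem_range_toCycles_iff, Subtype.forall, Subtype.exists, LinearMap.mem_ker]
    refine forall₂_congr fun y hy => ⟨?_, ?_⟩
    · rintro ⟨x, hx, _, _, ⟨w, rfl⟩, he⟩
      exact ⟨x, hx, w, congrArg Subtype.val he⟩
    · rintro ⟨x, hx, w, rfl⟩
      exact ⟨x, hx, _, S₂.moduleCat_zero_apply w, ⟨w, rfl⟩, rfl⟩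

end CategoryTheory.ShortComplex

namespace HomologicalComplex

variable {R ι : Type*} [Ring R] {c : ComplexShape ι}

theorem d_comp_d_apply (K : HomologicalComplex (ModuleCat R) c) (i j k : ι) (x : K.X i) :
    K.d j k (K.d i j x) = 0 := by
  rw [← ConcreteCategory.comp_apply, K.d_comp_d]
  rfl

theorem Hom.comm_apply {K L : HomologicalComplex (ModuleCat R) c} (f : K ⟶ L) (i j : ι)
    (x : K.X i) : L.d i j (f.f i x) = f.f j (K.d i j x) := by
  rw [← ConcreteCategory.comp_apply, f.comm, ConcreteCategory.comp_apply]

theorem quasiIsoAt_iff_moduleCat {K L : HomologicalComplex (ModuleCat R) c} (f : K ⟶ L)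
    (i j k : ι) (hi : c.prev j = i) (hk : c.next j = k) : QuasiIsoAt f j ↔
    (∀ x, K.d j k x = 0 → (∃ y, L.d i j y = f.f j x) → ∃ w, K.d i j w = x) ∧
      ∀ y, L.d j k y = 0 → ∃ x, K.d j k x = 0 ∧ ∃ z, f.f j x + L.d i j z = y :=
  (quasiIsoAt_iff' f i j k hi hk).trans (ShortComplex.quasiIso_iff_moduleCat _)

end HomologicalComplex

namespace Homotopy

variable {R : Type*} [Ring R] {K L : ChainComplex (ModuleCat R) ℕ} {f g : K ⟶ L}

theorem comm_zero_apply (h : Homotopy f g) (x : K.X 0) :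
    f.f 0 x = L.d 1 0 (h.hom 0 1 x) + g.f 0 x := by
  have hcomm := h.comm 0
  rw [dNext_zero_chainComplex, prevD_chainComplex] at hcomm
  simpa using ConcreteCategory.congr_hom hcomm x

theorem comm_succ_apply (h : Homotopy f g) (n : ℕ) (x : K.X (n + 1)) :
    f.f (n + 1) x = h.hom n (n + 1) (K.d (n + 1) n x) +
      L.d (n + 2) (n + 1) (h.hom (n + 1) (n + 2) x) + g.f (n + 1) x := by
  have hcomm := h.comm (n + 1)
  rw [dNext_succ_chainComplex, prevD_chainComplex] at hcomm
  simpa using ConcreteCategory.congr_hom hcomm x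

end Homotopy

section

variable {R : Type} [CommRing R] {F Ft : ChainComplex (ModuleCat.{0} R) ℕ}

theorem deltaG_apply (x : F.X 2) : deltaG F Ft x = (F.d 2 1 x, 0) := rfl

theorem deltaGt_apply (x : Ft.X 2) : deltaGt F Ft x = (0, Ft.d 2 1 x) := rfl

theorem deltaG_eq_zero_iff (x : F.X 2) : deltaG F Ft x = 0 ↔ F.d 2 1 x = 0 := by
  rw [deltaG_apply, Prod.mk_eq_zero, and_iff_left rfl]

theorem deltaGt_eq_zero_iff (x : Ft.X 2) : deltaGt F Ft x = 0 ↔ Ft.d 2 1 x = 0 := by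
  rw [deltaGt_apply, Prod.mk_eq_zero, and_iff_right rfl]

theorem mapA_apply (a : F ⟶ Ft) (b : Ft ⟶ F) (s : Ft.X 0 →ₗ[R] Ft.X 1) (u : F.X 1)
    (v : Ft.X 0) : mapA a b s (u, v) = (F.d 1 0 u - b.f 0 v, a.f 1 u + s v) := rfl

theorem complexG_d_one_zero : (complexG F Ft).d 1 0 = deltaG F Ft :=
  ChainComplex.of_d (auxX F _) (auxD F _ (deltaG F Ft)) 0

theorem complexG_d_add_two (n : ℕ) : (complexG F Ft).d (n + 2) (n + 1) = F.d (n + 3) (n + 2) :=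
  ChainComplex.of_d _ _ (n + 1)

theorem complexGt_d_one_zero : (complexGt F Ft).d 1 0 = deltaGt F Ft :=
  ChainComplex.of_d (auxX Ft _) (auxD Ft _ (deltaGt F Ft)) 0

theorem complexGt_d_add_two (n : ℕ) :
    (complexGt F Ft).d (n + 2) (n + 1) = Ft.d (n + 3) (n + 2) :=
  ChainComplex.of_d _ _ (n + 1)

variable (a : F ⟶ Ft) (b : Ft ⟶ F) (s : Ft.X 0 →ₗ[R] Ft.X 1)

theorem homGGt_quasiIsoAt_add_two_iff (n : ℕ) :
    QuasiIsoAt (homGGt a b s) (n + 2) ↔ QuasiIsoAt a (n + 3) := by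
  rw [HomologicalComplex.quasiIsoAt_iff_moduleCat _ (n + 3) (n + 2) (n + 1) (by simp) (by simp),
    HomologicalComplex.quasiIsoAt_iff_moduleCat _ (n + 4) (n + 3) (n + 2) (by simp) (by simp)]
  simp only [complexG_d_add_two, complexGt_d_add_two]
  rfl

theorem homGGt_quasiIsoAt_one [QuasiIsoAt a 2] : QuasiIsoAt (homGGt a b s) 1 := by
  obtain ⟨a_inj, a_surj⟩ :=
    (HomologicalComplex.quasiIsoAt_iff_moduleCat a 3 2 1 (by simp) (by simp)).1 ‹_›
  rw [HomologicalComplex.quasiIsoAt_iff_moduleCat _ 2 1 0 (by simp) (by simp)]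
  simp only [complexG_d_add_two 0, complexGt_d_add_two 0, complexG_d_one_zero,
    complexGt_d_one_zero]
  refine ⟨fun x hx => a_inj x ((deltaG_eq_zero_iff x).1 hx), fun y hy => ?_⟩
  obtain ⟨x, hx, hxy⟩ := a_surj y ((deltaGt_eq_zero_iff y).1 hy)
  exact ⟨x, (deltaG_eq_zero_iff x).2 hx, hxy⟩

variable {a b s}

theorem d_s_apply (hs : (Ft.d 1 0).hom.comp s = LinearMap.id - (a.f 0).hom.comp (b.f 0).hom)
    (v : Ft.X 0) : Ft.d 1 0 (s v) = v - a.f 0 (b.f 0 v) :=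
  LinearMap.congr_fun hs v

theorem exists_deltaG_eq_of_deltaGt_eq_mapA [QuasiIsoAt a 1]
    (hs : (Ft.d 1 0).hom.comp s = LinearMap.id - (a.f 0).hom.comp (b.f 0).hom)
    {x : F.X 1 × Ft.X 0} {t : Ft.X 2} (ht : deltaGt F Ft t = mapA a b s x) :
    ∃ w, deltaG F Ft w = x := by
  obtain ⟨a_inj, -⟩ :=
    (HomologicalComplex.quasiIsoAt_iff_moduleCat a 2 1 0 (by simp) (by simp)).1 ‹_›
  obtain ⟨u, v⟩ := x
  rw [deltaGt_apply, mapA_apply, Prod.mk.injEq, eq_comm, sub_eq_zero] at ht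
  obtain ⟨hdu, hdt⟩ := ht
  have hv : v = 0 := by
    have := congrArg (Ft.d 1 0) hdt
    rwa [HomologicalComplex.d_comp_d_apply, map_add, HomologicalComplex.Hom.comm_apply, hdu,
      d_s_apply hs, add_sub_cancel, eq_comm] at this
  subst hv
  obtain ⟨w, rfl⟩ := a_inj u (by simpa using hdu) ⟨t, by simpa using hdt⟩
  exact ⟨w, rfl⟩

theorem exists_mapA_add_deltaGt_eq_mk_zero [QuasiIsoAt a 1] (h₂ : Homotopy (b ≫ a) (𝟙 Ft))
    (hs : (Ft.d 1 0).hom.comp s = LinearMap.id - (a.f 0).hom.comp (b.f 0).hom) (z : Ft.X 1) :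
    ∃ x t, mapA a b s x + deltaGt F Ft t = (0, z) := by
  obtain ⟨-, a_surj⟩ :=
    (HomologicalComplex.quasiIsoAt_iff_moduleCat a 2 1 0 (by simp) (by simp)).1 ‹_›
  set v := Ft.d 1 0 z
  have hab : a.f 0 (b.f 0 v) = Ft.d 1 0 (h₂.hom 0 1 v) + v := by
    simpa using h₂.comm_zero_apply v
  have hcycle : Ft.d 1 0 (s v + h₂.hom 0 1 v) = 0 := by
    rw [map_add, d_s_apply hs, hab]
    abel
  obtain ⟨c, hc, τ, hcτ⟩ := a_surj (-(s v + h₂.hom 0 1 v)) (by rw [map_neg, hcycle, neg_zero])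
  refine ⟨(b.f 1 z + c, v), τ - h₂.hom 1 2 z, ?_⟩
  rw [mapA_apply, deltaGt_apply, Prod.mk_add_mk, Prod.mk.injEq]
  constructor
  · rw [map_add, hc, ← HomologicalComplex.Hom.comm_apply]
    abel
  · have hab : a.f 1 (b.f 1 z) = h₂.hom 0 1 v + Ft.d 2 1 (h₂.hom 1 2 z) + z := by
      simpa using h₂.comm_succ_apply 0 z
    rw [map_add, hab, map_sub, eq_sub_of_add_eq hcτ]
    abel

theorem exists_mapA_add_deltaGt_eq [QuasiIsoAt a 1] (h₁ : Homotopy (a ≫ b) (𝟙 F))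
    (h₂ : Homotopy (b ≫ a) (𝟙 Ft))
    (hs : (Ft.d 1 0).hom.comp s = LinearMap.id - (a.f 0).hom.comp (b.f 0).hom)
    (y : F.X 0 × Ft.X 1) : ∃ x t, mapA a b s x + deltaGt F Ft t = y := by
  obtain ⟨w, z⟩ := y
  set x₀ : F.X 1 × Ft.X 0 := (-h₁.hom 0 1 w, -a.f 0 w)
  have hx₀ : (mapA a b s x₀).1 = w := by
    have hba : b.f 0 (a.f 0 w) = F.d 1 0 (h₁.hom 0 1 w) + w := by
      simpa using h₁.comm_zero_apply w
    rw [mapA_apply, map_neg, map_neg, hba, sub_neg_eq_add, neg_add_cancel_left]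
  obtain ⟨x, t, hxt⟩ := exists_mapA_add_deltaGt_eq_mk_zero h₂ hs (z - (mapA a b s x₀).2)
  refine ⟨x₀ + x, t, ?_⟩
  rw [map_add, add_assoc, hxt, Prod.mk_add_mk, hx₀, add_zero, add_sub_cancel]

theorem homGGt_quasiIsoAt_zero [QuasiIsoAt a 1] (h₁ : Homotopy (a ≫ b) (𝟙 F))
    (h₂ : Homotopy (b ≫ a) (𝟙 Ft))
    (hs : (Ft.d 1 0).hom.comp s = LinearMap.id - (a.f 0).hom.comp (b.f 0).hom) :
    QuasiIsoAt (homGGt a b s) 0 := by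
  rw [HomologicalComplex.quasiIsoAt_iff_moduleCat _ 1 0 0 (by simp) (by simp)]
  simp only [complexG_d_one_zero, complexGt_d_one_zero]
  refine ⟨fun x _ ⟨t, ht⟩ => exists_deltaG_eq_of_deltaGt_eq_mapA hs ht, fun y _ => ?_⟩
  obtain ⟨x, t, hxt⟩ := exists_mapA_add_deltaGt_eq h₁ h₂ hs y
  exact ⟨x, by rw [HomologicalComplex.shape _ 0 0 (by simp)]; rfl, t, hxt⟩

end

theorem homGGt_quasiIso_general {R : Type} [CommRing R]
    {F Ft : ChainComplex (ModuleCat.{0} R) ℕ}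
    (a : F ⟶ Ft) (b : Ft ⟶ F)
    (h₁ : Homotopy (a ≫ b) (𝟙 F)) (h₂ : Homotopy (b ≫ a) (𝟙 Ft))
    (s : Ft.X 0 →ₗ[R] Ft.X 1)
    (hs : ((Ft.d 1 0).hom : Ft.X 1 →ₗ[R] Ft.X 0).comp s
        = LinearMap.id - ((a.f 0).hom : F.X 0 →ₗ[R] Ft.X 0).comp (b.f 0).hom) :
    QuasiIso (homGGt a b s) := by
  have : QuasiIso a := (HomotopyEquiv.mk a b h₁ h₂).quasiIso_hom
  refine ⟨fun n => ?_⟩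
  match n with
  | 0 => exact homGGt_quasiIsoAt_zero h₁ h₂ hs
  | 1 => exact homGGt_quasiIsoAt_one a b s
  | n + 2 => exact (homGGt_quasiIsoAt_add_two_iff a b s n).2 inferInstance

/-- **Lemma.** Let `a : F → F̃` be a quasi-isomorphism of ℕ-indexed chain complexes of
finite free `R`-modules, let `b : F̃ → F` be a homotopy inverse of `a` and let
`s : F̃₀ → F̃₁` satisfy `d̃₁ ∘ s = id - a₀ ∘ b₀`.  Then the chain map from
`G : ⋯ → F₃ → F₂ → F₁ ⊕ F̃₀ → 0` to `G̃ : ⋯ → F̃₃ → F̃₂ → F₀ ⊕ F̃₁ → 0` given by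
`a_{n+2}` in degrees `n + 1 ≥ 1` and by `A(u,v) = (d₁ u - b₀ v, a₁ u + s v)` in degree `0`
is a quasi-isomorphism. -/
theorem homGGt_quasiIso {R : Type} [CommRing R]
    {F Ft : ChainComplex (ModuleCat.{0} R) ℕ} {rF rFt : ℕ → ℕ}
    (bF : ∀ j, Module.Basis (Fin (rF j)) R (F.X j))
    (bFt : ∀ j, Module.Basis (Fin (rFt j)) R (Ft.X j))
    (a : F ⟶ Ft) (ha : QuasiIso a) (b : Ft ⟶ F)
    (h₁ : Homotopy (a ≫ b) (𝟙 F)) (h₂ : Homotopy (b ≫ a) (𝟙 Ft))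
    (s : Ft.X 0 →ₗ[R] Ft.X 1)
    (hs : ((Ft.d 1 0).hom : Ft.X 1 →ₗ[R] Ft.X 0).comp s
        = LinearMap.id - ((a.f 0).hom : F.X 0 →ₗ[R] Ft.X 0).comp (b.f 0).hom) :
    QuasiIso (homGGt a b s) :=
  homGGt_quasiIso_general a b h₁ h₂ s hs
end

section
/- Let R be a nonzero commutative ring and let F and G be bounded complexes of finite free R-modules which are quasi-isomorphic. Then their Euler characteristics agree: Σ_j (−1)^j rank F_j = Σ_j (−1)^j rank G_j. -/
open CategoryTheory

namespace EulerAux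
universe v
variable {R : Type} [CommRing R]

lemma hom_comm₂₃ {S₁ S₂ : ShortComplex (ModuleCat.{v} R)} (φ : S₁ ⟶ S₂) (x : S₁.X₂) :
    S₂.g (φ.τ₂ x) = φ.τ₃ (S₁.g x) :=
  congrFun (congrArg (fun (f : S₁.X₂ ⟶ S₂.X₃) => (f : S₁.X₂ → S₂.X₃)) φ.comm₂₃) x

lemma hom_comm₁₂ {S₁ S₂ : ShortComplex (ModuleCat.{v} R)} (φ : S₁ ⟶ S₂) (x : S₁.X₁) :
    S₂.f (φ.τ₁ x) = φ.τ₂ (S₁.f x) :=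
  (congrFun (congrArg (fun (f : S₁.X₁ ⟶ S₂.X₂) => (f : S₁.X₁ → S₂.X₂)) φ.comm₁₂) x)

/-- restriction of φ.τ₂ to cycles -/
noncomputable def φK {S₁ S₂ : ShortComplex (ModuleCat.{v} R)} (φ : S₁ ⟶ S₂) :
    LinearMap.ker S₁.g.hom →ₗ[R] LinearMap.ker S₂.g.hom :=
  (φ.τ₂.hom : S₁.X₂ →ₗ[R] S₂.X₂).restrict (p := LinearMap.ker S₁.g.hom) (q := LinearMap.ker S₂.g.hom)
    (fun x hx => by
      simp only [LinearMap.mem_ker] at hx ⊢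
      show S₂.g (φ.τ₂ x) = 0
      rw [hom_comm₂₃, hx, map_zero])

noncomputable def φH {S₁ S₂ : ShortComplex (ModuleCat.{v} R)} (φ : S₁ ⟶ S₂) :
    (LinearMap.ker S₁.g.hom ⧸ LinearMap.range S₁.moduleCatToCycles) →ₗ[R]
      (LinearMap.ker S₂.g.hom ⧸ LinearMap.range S₂.moduleCatToCycles) :=
  Submodule.mapQ _ _ (φK φ) (by
    rintro _ ⟨v, rfl⟩
    refine ⟨φ.τ₁ v, ?_⟩
    ext
    show S₂.f (φ.τ₁ v) = φ.τ₂ (S₁.f v)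
    exact hom_comm₁₂ φ v)

noncomputable def lhmd {S₁ S₂ : ShortComplex (ModuleCat.{v} R)} (φ : S₁ ⟶ S₂) :
    ShortComplex.LeftHomologyMapData φ S₁.moduleCatLeftHomologyData S₂.moduleCatLeftHomologyData where
  φK := ModuleCat.ofHom (φK φ)
  φH := ModuleCat.ofHom (φH φ)
  commi := by ext x; rfl
  commf' := by
    ext x
    show φK φ (S₁.moduleCatToCycles x) = S₂.moduleCatToCycles (φ.τ₁ x)
    ext
    show φ.τ₂ (S₁.f x) = S₂.f (φ.τ₁ x)
    exact (hom_comm₁₂ φ x).symm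
  commπ := by ext x; rfl

lemma bij_φH {S₁ S₂ : ShortComplex (ModuleCat.{v} R)} (φ : S₁ ⟶ S₂)
    (h : ShortComplex.QuasiIso φ) : Function.Bijective (φH φ) := by
  have e := (lhmd φ).homologyMap_eq
  have : IsIso (ShortComplex.homologyMap φ) := (ShortComplex.quasiIso_iff φ).mp h
  rw [e] at this
  have h1 : IsIso ((lhmd φ).φH ≫ S₂.moduleCatLeftHomologyData.homologyIso.inv) :=
    IsIso.of_isIso_comp_left S₁.moduleCatLeftHomologyData.homologyIso.hom _
  have h2 : IsIso (lhmd φ).φH := IsIso.of_isIso_comp_right _ S₂.moduleCatLeftHomologyData.homologyIso.inv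
  exact ConcreteCategory.bijective_of_isIso ((lhmd φ).φH)

end EulerAux

namespace EulerAux
variable {R : Type} [CommRing R]

lemma surj_of_quasiIso {S₁ S₂ : ShortComplex (ModuleCat.{v} R)} (φ : S₁ ⟶ S₂)
    (h : ShortComplex.QuasiIso φ) (z : S₂.X₂) (hz : S₂.g z = 0) :
    ∃ (w : S₁.X₂) (v : S₂.X₁), S₁.g w = 0 ∧ z = φ.τ₂ w + S₂.f v := by
  obtain ⟨c, hc⟩ := (bij_φH φ h).2 (Submodule.Quotient.mk ⟨z, hz⟩)
  obtain ⟨⟨w, hw⟩, rfl⟩ := Submodule.Quotient.mk_surjective _ c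
  rw [show φH φ (Submodule.Quotient.mk ⟨w, hw⟩) = Submodule.Quotient.mk (φK φ ⟨w, hw⟩) from rfl] at hc
  rw [← sub_eq_zero, ← Submodule.Quotient.mk_sub, Submodule.Quotient.mk_eq_zero] at hc
  obtain ⟨v, hv⟩ := hc
  refine ⟨w, -v, hw, ?_⟩
  have := congrArg (Subtype.val) hv
  simp only [ShortComplex.moduleCatToCycles] at this
  -- this : S₂.f v = (φK φ ⟨w,hw⟩ - ⟨z,hz⟩).val
  have h2 : (S₂.f v : S₂.X₂) = φ.τ₂ w - z := this
  rw [eq_sub_iff_add_eq] at h2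
  rw [map_neg, ← h2]; abel

lemma inj_of_quasiIso {S₁ S₂ : ShortComplex (ModuleCat.{v} R)} (φ : S₁ ⟶ S₂)
    (h : ShortComplex.QuasiIso φ) (x : S₁.X₂) (hx : S₁.g x = 0)
    (v : S₂.X₁) (hv : φ.τ₂ x = S₂.f v) : ∃ u : S₁.X₁, S₁.f u = x := by
  have h0 : φH φ (Submodule.Quotient.mk ⟨x, hx⟩) = 0 := by
    rw [show φH φ (Submodule.Quotient.mk ⟨x, hx⟩) = Submodule.Quotient.mk (φK φ ⟨x, hx⟩) from rfl,
      Submodule.Quotient.mk_eq_zero]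
    exact ⟨v, by ext; exact hv.symm⟩
  have := (bij_φH φ h).1 (a₂ := 0) (by rw [h0, map_zero])
  rw [Submodule.Quotient.mk_eq_zero] at this
  obtain ⟨u, hu⟩ := this
  exact ⟨u, congrArg Subtype.val hu⟩

end EulerAux


namespace EulerAux
variable {R : Type} [CommRing R]

lemma subsingleton_of_basis_zero {M : Type v} [AddCommGroup M] [Module R M] {n : ℕ}
    (h : n = 0) (b : Module.Basis (Fin n) R M) : Subsingleton M := by
  subst h
  exact b.repr.toEquiv.subsingleton

lemma rank_zero_of_subsingleton [Nontrivial R] {M : Type v} [AddCommGroup M] [Module R M]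
    [Subsingleton M] {n : ℕ} (b : Module.Basis (Fin n) R M) : n = 0 := by
  rcases Nat.eq_zero_or_pos n with h | h
  · exact h
  · exact absurd (Subsingleton.elim (b ⟨0, h⟩) 0) (b.ne_zero ⟨0, h⟩)

section SC
variable (C : ℕ → Type v) [∀ j, AddCommGroup (C j)] [∀ j, Module R (C j)]

/-- The shortened complex. -/
def SC : ℕ → Type v
  | 0 => C 1
  | 1 => C 2 × C 0
  | (j+2) => C (j+3)

instance SCacg : ∀ j, AddCommGroup (SC C j)
  | 0 => inferInstanceAs (AddCommGroup (C 1))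
  | 1 => inferInstanceAs (AddCommGroup (C 2 × C 0))
  | (j+2) => inferInstanceAs (AddCommGroup (C (j+3)))

instance SCmod : ∀ j, Module R (SC C j)
  | 0 => inferInstanceAs (Module R (C 1))
  | 1 => inferInstanceAs (Module R (C 2 × C 0))
  | (j+2) => inferInstanceAs (Module R (C (j+3)))

variable {C}

/-- The shortened differential. -/
def Sd (d : ∀ j, C (j+1) →ₗ[R] C j) (s : C 0 →ₗ[R] C 1) :
    ∀ j, SC C (j+1) →ₗ[R] SC C j
  | 0 => (d 1).comp (LinearMap.fst R (C 2) (C 0)) + s.comp (LinearMap.snd R (C 2) (C 0))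
  | 1 => LinearMap.prod (d 2) 0
  | (j+2) => d (j+3)

/-- The shortened rank function. -/
def Sr (r : ℕ → ℕ) : ℕ → ℕ
  | 0 => r 1
  | 1 => r 2 + r 0
  | (j+2) => r (j+3)

/-- The shortened bases. -/
noncomputable def Sb (r : ℕ → ℕ) (b : ∀ j, Module.Basis (Fin (r j)) R (C j)) :
    ∀ j, Module.Basis (Fin (Sr r j)) R (SC C j)
  | 0 => b 1
  | 1 => (Module.Basis.prod (b 2) (b 0)).reindex finSumFinEquiv
  | (j+2) => b (j+3)

end SC

theorem chi_exact [Nontrivial R] (N : ℕ) :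
    ∀ (C : ℕ → Type v) (_ : ∀ j, AddCommGroup (C j)) (_ : ∀ j, Module R (C j))
    (d : ∀ j, C (j+1) →ₗ[R] C j) (r : ℕ → ℕ)
    (_ : ∀ j, Module.Basis (Fin (r j)) R (C j))
    (_ : ∀ j (x : C (j+2)), d j (d (j+1) x) = 0)
    (_ : Function.Surjective (d 0))
    (_ : ∀ j (x : C (j+1)), d j x = 0 → ∃ y, d (j+1) y = x)
    (_ : ∀ j, N < j → r j = 0),
    ∑ j ∈ Finset.range (N+1), (-1:ℤ)^j * (r j : ℤ) = 0 := by
  induction N using Nat.strong_induction_on with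
  | _ N IH =>
  intro C ig im d r b hdd hsurj hex hbd
  match h : N with
  | 0 =>
      haveI h1 : Subsingleton (C 1) := subsingleton_of_basis_zero (hbd 1 (by omega)) (b 1)
      haveI h0 : Subsingleton (C 0) := hsurj.subsingleton
      have : r 0 = 0 := rank_zero_of_subsingleton (b 0)
      simp [this]
  | 1 =>
      haveI h2 : Subsingleton (C 2) := subsingleton_of_basis_zero (hbd 2 (by omega)) (b 2)
      have hinj : Function.Injective (d 0) := by
        rw [← LinearMap.ker_eq_bot, Submodule.eq_bot_iff]
        intro x hx
        obtain ⟨y, hy⟩ := hex 0 x hx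
        rw [← hy, Subsingleton.elim y 0, map_zero]
      have e : (Fin (r 1) → R) ≃ₗ[R] (Fin (r 0) → R) :=
        (((b 1).equivFun.symm.trans
          (LinearEquiv.ofBijective (d 0) ⟨hinj, hsurj⟩)).trans (b 0).equivFun)
      have : r 1 = r 0 := eq_of_fin_equiv R e
      simp [Finset.sum_range_succ, this]
  | (M+2) =>
      -- a section of d 0
      haveI : Module.Free R (C 0) := Module.Free.of_basis (b 0)
      obtain ⟨s, hs⟩ := Module.projective_lifting_property (d 0) LinearMap.id hsurj
      have hs' : ∀ x, d 0 (s x) = x := fun x => LinearMap.congr_fun hs x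
      have key := IH (M+1) (by omega) (SC C) inferInstance inferInstance (Sd d s) (Sr r)
        (Sb r b)
        (by
          intro j x
          match j with
          | 0 => show d 1 (d 2 x) + s 0 = 0; rw [hdd 1 x, map_zero, add_zero]
          | 1 =>
              show (d 2 (d 3 x), (0 : C 0)) = 0
              rw [hdd 2 x]; rfl
          | (j+2) => exact hdd (j+3) x)
        (by
          have main : ∀ c₁ : C 1, ∃ y : C 2 × C 0, d 1 y.1 + s y.2 = c₁ := by
            intro c₁
            obtain ⟨c₂, hc₂⟩ := hex 0 (c₁ - s (d 0 c₁)) (by rw [map_sub, hs', sub_self])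
            refine ⟨(⟨c₂, d 0 c₁⟩ : C 2 × C 0), ?_⟩
            show d 1 c₂ + s (d 0 c₁) = c₁
            rw [hc₂]; abel
          exact main)
        (by
          intro j x hx
          match j with
          | 0 =>
              have main : ∀ x : C 2 × C 0, d 1 x.1 + s x.2 = 0 →
                  ∃ y : C 3, ((d 2 y, (0 : C 0)) : C 2 × C 0) = x := by
                rintro ⟨x₁, x₂⟩ hx
                have h2 : x₂ = 0 := by
                  have h3 := congrArg (d 0) hx
                  rw [map_add, map_zero, hdd 0 x₁, zero_add, hs'] at h3
                  exact h3
                rw [h2, map_zero, add_zero] at hx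
                obtain ⟨y, hy⟩ := hex 1 x₁ hx
                exact ⟨y, by rw [hy, h2]⟩
              exact main x hx
          | 1 =>
              have hx1 : d 2 x = 0 := congrArg Prod.fst hx
              obtain ⟨y, hy⟩ := hex 2 x hx1
              exact ⟨y, hy⟩
          | (j+2) => exact hex (j+3) x hx)
        (by
          intro j hj
          match j, hj with
          | (k+2), hj => show r (k+3) = 0; exact hbd (k+3) (by omega))
      -- now the arithmetic
      have expand : ∀ (f : ℕ → ℤ) (n : ℕ), ∑ j ∈ Finset.range (n+2), f j
          = (∑ j ∈ Finset.range n, f (j+2)) + f 1 + f 0 := by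
        intro f n
        rw [Finset.sum_range_succ' f (n+1), Finset.sum_range_succ' (fun i => f (i+1)) n]
      have e1 := expand (fun j => (-1:ℤ)^j * (r j : ℤ)) (M+1)
      have e2 := expand (fun j => (-1:ℤ)^j * (Sr r j : ℤ)) M
      rw [e2] at key
      have e3 : ∑ j ∈ Finset.range (M+1), (-1:ℤ)^(j+2) * (r (j+2) : ℤ)
          = (∑ j ∈ Finset.range M, (-1:ℤ)^(j+3) * (r (j+3) : ℤ)) + (-1:ℤ)^2 * (r 2 : ℤ) := by
        rw [Finset.sum_range_succ' (fun j => (-1:ℤ)^(j+2) * (r (j+2) : ℤ)) M]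
      have e4 : ∀ j, ((Sr r (j+2) : ℤ)) = (r (j+3) : ℤ) := fun j => rfl
      have e5 : ((Sr r 1 : ℤ)) = (r 2 : ℤ) + (r 0 : ℤ) := by show ((r 2 + r 0 : ℕ) : ℤ) = _; push_cast; ring
      have e6 : ((Sr r 0 : ℤ)) = (r 1 : ℤ) := rfl
      simp only [e4, e5, e6] at key
      have e7 : ∑ j ∈ Finset.range M, (-1:ℤ)^(j+2) * (r (j+3) : ℤ)
          = - ∑ j ∈ Finset.range M, (-1:ℤ)^(j+3) * (r (j+3) : ℤ) := by
        rw [← Finset.sum_neg_distrib]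
        refine Finset.sum_congr rfl fun j _ => ?_
        ring
      rw [e7] at key
      show ∑ j ∈ Finset.range (M+2+1), (-1:ℤ)^j * (r j : ℤ) = 0
      rw [show M+2+1 = (M+1)+2 from rfl, e1, e3]
      simp only [pow_succ, pow_zero] at key ⊢
      linarith [key]

end EulerAux
namespace EulerAux
universe v

section Cone
variable {R : Type} [CommRing R] (F G : ChainComplex (ModuleCat.{v} R) ℕ)

/-- The mapping cone of a chain map, as a family of modules. -/
def Cone : ℕ → Type v
  | 0 => G.X 0
  | (j+1) => F.X j × G.X (j+1)

instance coneAcg : ∀ j, AddCommGroup (Cone F G j)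
  | 0 => inferInstanceAs (AddCommGroup (G.X 0))
  | (j+1) => inferInstanceAs (AddCommGroup (F.X j × G.X (j+1)))

instance coneMod : ∀ j, Module R (Cone F G j)
  | 0 => inferInstanceAs (Module R (G.X 0))
  | (j+1) => inferInstanceAs (Module R (F.X j × G.X (j+1)))

variable {F G}

/-- The differential of the mapping cone. -/
def coneD (a : F ⟶ G) : ∀ j, Cone F G (j+1) →ₗ[R] Cone F G j
  | 0 => LinearMap.comp (G.d 1 0).hom (LinearMap.snd R (F.X 0) (G.X 1))
      - LinearMap.comp (a.f 0).hom (LinearMap.fst R (F.X 0) (G.X 1))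
  | (j+1) => LinearMap.prod
      (- LinearMap.comp (F.d (j+1) j).hom (LinearMap.fst R (F.X (j+1)) (G.X (j+2))))
      (LinearMap.comp (G.d (j+2) (j+1)).hom (LinearMap.snd R (F.X (j+1)) (G.X (j+2)))
        - LinearMap.comp (a.f (j+1)).hom (LinearMap.fst R (F.X (j+1)) (G.X (j+2))))

/-- The rank function of the mapping cone. -/
def coneR (rF rG : ℕ → ℕ) : ℕ → ℕ
  | 0 => rG 0
  | (j+1) => rF j + rG (j+1)

/-- Bases for the mapping cone. -/
noncomputable def coneB {rF rG : ℕ → ℕ} (bF : ∀ j, Module.Basis (Fin (rF j)) R (F.X j))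
    (bG : ∀ j, Module.Basis (Fin (rG j)) R (G.X j)) :
    ∀ j, Module.Basis (Fin (coneR rF rG j)) R (Cone F G j)
  | 0 => bG 0
  | (j+1) => (Module.Basis.prod (bF j) (bG (j+1))).reindex finSumFinEquiv

lemma dd_apply (K : ChainComplex (ModuleCat R) ℕ) (i j k : ℕ) (x : K.X i) :
    K.d j k (K.d i j x) = 0 :=
  congrFun (congrArg (fun (f : K.X i ⟶ K.X k) => (f : K.X i → K.X k)) (K.d_comp_d i j k)) x

lemma comm_apply (a : F ⟶ G) (i j : ℕ) (x : F.X i) :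
    G.d i j (a.f i x) = a.f j (F.d i j x) :=
  congrFun (congrArg (fun (f : F.X i ⟶ G.X j) => (f : F.X i → G.X j)) (a.comm i j)) x

end Cone

end EulerAux

open EulerAux in
/-- **Theorem.** Let `R` be a nonzero commutative ring and let `F` and `G` be bounded
complexes of finite free `R`-modules (here: ℕ-indexed chain complexes whose terms vanish
in degrees `> N₁`, resp. `> N₂`) which are quasi-isomorphic. Then their Euler
characteristics agree: `Σ_j (-1)^j rank F_j = Σ_j (-1)^j rank G_j`. -/
theorem euler_char_eq_of_quasiIso {R : Type} [CommRing R] [Nontrivial R]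
    {F G : ChainComplex (ModuleCat R) ℕ} {rF rG : ℕ → ℕ}
    (bF : ∀ j, Module.Basis (Fin (rF j)) R (F.X j))
    (bG : ∀ j, Module.Basis (Fin (rG j)) R (G.X j))
    (N₁ N₂ : ℕ)
    (hFbd : ∀ j : ℕ, N₁ < j → rF j = 0)
    (hGbd : ∀ j : ℕ, N₂ < j → rG j = 0)
    (a : F ⟶ G) (ha : QuasiIso a) :
    ∑ j ∈ Finset.range (N₁ + 1), (-1 : ℤ) ^ j * (rF j : ℤ)
      = ∑ j ∈ Finset.range (N₂ + 1), (-1 : ℤ) ^ j * (rG j : ℤ) := by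
  -- concrete consequences of the quasi-isomorphism
  have surjS : ∀ j (z : G.X (j+1)), G.d (j+1) j z = 0 →
      ∃ (w : F.X (j+1)) (v : G.X (j+2)),
        F.d (j+1) j w = 0 ∧ z = a.f (j+1) w + G.d (j+2) (j+1) v := by
    intro j z hz
    have hq : ShortComplex.QuasiIso
        ((HomologicalComplex.shortComplexFunctor' (ModuleCat R) _ (j+2) (j+1) j).map a) :=
      (quasiIsoAt_iff' a (j+2) (j+1) j (by simp [ChainComplex.prev])
        (ChainComplex.next_nat_succ j)).mp inferInstance
    obtain ⟨w, v, hw, hv⟩ := surj_of_quasiIso _ hq z hz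
    exact ⟨w, v, hw, hv⟩
  have surj0 : ∀ z : G.X 0, ∃ (w : F.X 0) (v : G.X 1), z = a.f 0 w + G.d 1 0 v := by
    intro z
    have hq : ShortComplex.QuasiIso
        ((HomologicalComplex.shortComplexFunctor' (ModuleCat R) _ 1 0 0).map a) :=
      (quasiIsoAt_iff' a 1 0 0 (by simp [ChainComplex.prev])
        ChainComplex.next_nat_zero).mp inferInstance
    have hz : G.d 0 0 z = 0 := by rw [G.shape 0 0 (by simp)]; rfl
    obtain ⟨w, v, _, hv⟩ := surj_of_quasiIso _ hq z hz
    exact ⟨w, v, hv⟩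
  have injS : ∀ j (x : F.X (j+1)), F.d (j+1) j x = 0 →
      ∀ v : G.X (j+2), a.f (j+1) x = G.d (j+2) (j+1) v →
      ∃ u : F.X (j+2), F.d (j+2) (j+1) u = x := by
    intro j x hx v hv
    have hq : ShortComplex.QuasiIso
        ((HomologicalComplex.shortComplexFunctor' (ModuleCat R) _ (j+2) (j+1) j).map a) :=
      (quasiIsoAt_iff' a (j+2) (j+1) j (by simp [ChainComplex.prev])
        (ChainComplex.next_nat_succ j)).mp inferInstance
    exact inj_of_quasiIso _ hq x hx v hv
  have inj0 : ∀ x : F.X 0, ∀ v : G.X 1, a.f 0 x = G.d 1 0 v →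
      ∃ u : F.X 1, F.d 1 0 u = x := by
    intro x v hv
    have hq : ShortComplex.QuasiIso
        ((HomologicalComplex.shortComplexFunctor' (ModuleCat R) _ 1 0 0).map a) :=
      (quasiIsoAt_iff' a 1 0 0 (by simp [ChainComplex.prev])
        ChainComplex.next_nat_zero).mp inferInstance
    have hx : F.d 0 0 x = 0 := by rw [F.shape 0 0 (by simp)]; rfl
    exact inj_of_quasiIso _ hq x hx v hv
  -- apply the Euler characteristic lemma to the cone
  have hdd' : ∀ j (x : Cone F G (j+2)), coneD (R := R) a j (coneD (R := R) a (j+1) x) = 0 := by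
      intro j x
      match j with
      | 0 =>
          have main : ∀ x : F.X 1 × G.X 2,
              G.d 1 0 (G.d 2 1 x.2 - a.f 1 x.1) - a.f 0 (-(F.d 1 0 x.1)) = 0 := by
            intro x
            rw [map_sub, map_neg, dd_apply, comm_apply, zero_sub, sub_neg_eq_add]
            abel
          exact main x
      | (j+1) =>
          have main : ∀ x : F.X (j+2) × G.X (j+3),
              ((-(F.d (j+1) j (-(F.d (j+2) (j+1) x.1))),
                G.d (j+2) (j+1) (G.d (j+3) (j+2) x.2 - a.f (j+2) x.1)
                  - a.f (j+1) (-(F.d (j+2) (j+1) x.1))) : F.X j × G.X (j+1)) = 0 := by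
            intro x
            have h1 : -(F.d (j+1) j (-(F.d (j+2) (j+1) x.1))) = (0 : F.X j) := by
              rw [map_neg, dd_apply]; abel
            have h2 : G.d (j+2) (j+1) (G.d (j+3) (j+2) x.2 - a.f (j+2) x.1)
                - a.f (j+1) (-(F.d (j+2) (j+1) x.1)) = (0 : G.X (j+1)) := by
              rw [map_sub, map_neg, dd_apply, comm_apply, zero_sub, sub_neg_eq_add]
              abel
            rw [h1, h2]; rfl
          exact main x
  have hsurj' : Function.Surjective (coneD (R := R) a 0) := by
      have main : ∀ z : G.X 0, ∃ y : F.X 0 × G.X 1, G.d 1 0 y.2 - a.f 0 y.1 = z := by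
        intro z
        obtain ⟨w, v, hwv⟩ := surj0 z
        refine ⟨⟨-w, v⟩, ?_⟩
        show G.d 1 0 v - a.f 0 (-w) = z
        rw [map_neg, sub_neg_eq_add, hwv]; abel
      intro z
      obtain ⟨y, hy⟩ := main z
      exact ⟨y, hy⟩
  have hex' : ∀ j (x : Cone F G (j+1)), coneD (R := R) a j x = 0 → ∃ y, coneD (R := R) a (j+1) y = x := by
      intro j x hx
      match j with
      | 0 =>
          have main : ∀ x : F.X 0 × G.X 1, G.d 1 0 x.2 - a.f 0 x.1 = 0 →
              ∃ y : F.X 1 × G.X 2,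
                ((-(F.d 1 0 y.1), G.d 2 1 y.2 - a.f 1 y.1) : F.X 0 × G.X 1) = x := by
            intro x hx
            have hc : a.f 0 x.1 = G.d 1 0 x.2 := (sub_eq_zero.mp hx).symm
            obtain ⟨u, hu⟩ := inj0 x.1 x.2 hc
            have hz : G.d 1 0 (x.2 - a.f 1 u) = 0 := by
              rw [map_sub, comm_apply, hu, ← hc, sub_self]
            obtain ⟨w, v, hw, hzv⟩ := surjS 0 (x.2 - a.f 1 u) hz
            refine ⟨⟨-u - w, v⟩, ?_⟩
            have h1 : -(F.d 1 0 (-u - w)) = x.1 := by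
              rw [map_sub, map_neg, hw, hu]; abel
            have h2 : G.d 2 1 v - a.f 1 (-u - w) = x.2 := by
              rw [sub_eq_iff_eq_add] at hzv
              rw [map_sub, map_neg, hzv]; abel
            rw [Prod.ext_iff]; exact ⟨h1, h2⟩
          exact main x hx
      | (j+1) =>
          have main : ∀ x : F.X (j+1) × G.X (j+2),
              ((-(F.d (j+1) j x.1),
                G.d (j+2) (j+1) x.2 - a.f (j+1) x.1) : F.X j × G.X (j+1)) = 0 →
              ∃ y : F.X (j+2) × G.X (j+3),
                ((-(F.d (j+2) (j+1) y.1),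
                  G.d (j+3) (j+2) y.2 - a.f (j+2) y.1) : F.X (j+1) × G.X (j+2)) = x := by
            intro x hx
            rw [Prod.ext_iff] at hx
            obtain ⟨hx1, hx2⟩ := hx
            have hcyc : F.d (j+1) j x.1 = 0 := by
              have := neg_eq_zero.mp hx1
              exact this
            have hc : a.f (j+1) x.1 = G.d (j+2) (j+1) x.2 := (sub_eq_zero.mp hx2).symm
            obtain ⟨u, hu⟩ := injS j x.1 hcyc x.2 hc
            have hz : G.d (j+2) (j+1) (x.2 - a.f (j+2) u) = 0 := by
              rw [map_sub, comm_apply, hu, ← hc, sub_self]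
            obtain ⟨w, v, hw, hzv⟩ := surjS (j+1) (x.2 - a.f (j+2) u) hz
            refine ⟨⟨-u - w, v⟩, ?_⟩
            have h1 : -(F.d (j+2) (j+1) (-u - w)) = x.1 := by
              rw [map_sub, map_neg, hw, hu]; abel
            have h2 : G.d (j+3) (j+2) v - a.f (j+2) (-u - w) = x.2 := by
              rw [sub_eq_iff_eq_add] at hzv
              rw [map_sub, map_neg, hzv]; abel
            rw [Prod.ext_iff]; exact ⟨h1, h2⟩
          exact main x hx
  have hbd' : ∀ j, N₁ + N₂ + 2 < j → coneR rF rG j = 0 := by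
      intro j hj
      match j, hj with
      | (k+1), hj =>
          show rF k + rG (k+1) = 0
          rw [hFbd k (by omega), hGbd (k+1) (by omega)]
  have key := chi_exact (R := R) (N₁ + N₂ + 2) (Cone F G) inferInstance inferInstance
    (coneD (R := R) a) (coneR rF rG) (coneB bF bG) hdd' hsurj' hex' hbd'
  -- arithmetic
  set K := N₁ + N₂ + 2 with hK
  rw [Finset.sum_range_succ' (fun j => (-1:ℤ)^j * (coneR rF rG j : ℤ)) K] at key
  have hterm : ∀ j, ((coneR rF rG (j+1) : ℤ)) = (rF j : ℤ) + (rG (j+1) : ℤ) := by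
    intro j
    show ((rF j + rG (j+1) : ℕ) : ℤ) = _
    push_cast
    ring
  have split : ∑ j ∈ Finset.range K, (-1:ℤ)^(j+1) * (coneR rF rG (j+1) : ℤ)
      = (- ∑ j ∈ Finset.range K, (-1:ℤ)^j * (rF j : ℤ))
        + ∑ j ∈ Finset.range K, (-1:ℤ)^(j+1) * (rG (j+1) : ℤ) := by
    rw [← Finset.sum_neg_distrib, ← Finset.sum_add_distrib]
    refine Finset.sum_congr rfl fun j _ => ?_
    rw [hterm]
    ring
  have hGsum : ∑ j ∈ Finset.range (K+1), (-1:ℤ)^j * (rG j : ℤ)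
      = (∑ j ∈ Finset.range K, (-1:ℤ)^(j+1) * (rG (j+1) : ℤ)) + (-1:ℤ)^0 * (rG 0 : ℤ) :=
    Finset.sum_range_succ' (fun j => (-1:ℤ)^j * (rG j : ℤ)) K
  have hcone0 : ((coneR rF rG 0 : ℤ)) = (rG 0 : ℤ) := rfl
  rw [split, hcone0] at key
  have truncF : ∑ j ∈ Finset.range (N₁+1), (-1:ℤ)^j * (rF j : ℤ)
      = ∑ j ∈ Finset.range K, (-1:ℤ)^j * (rF j : ℤ) := by
    refine Finset.sum_subset (Finset.range_subset_range.mpr (by omega)) fun j _ hj => ?_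
    rw [Finset.mem_range] at hj
    rw [hFbd j (by omega)]
    simp
  have truncG : ∑ j ∈ Finset.range (N₂+1), (-1:ℤ)^j * (rG j : ℤ)
      = ∑ j ∈ Finset.range (K+1), (-1:ℤ)^j * (rG j : ℤ) := by
    refine Finset.sum_subset (Finset.range_subset_range.mpr (by omega)) fun j _ hj => ?_
    rw [Finset.mem_range] at hj
    rw [hGbd j (by omega)]
    simp
  rw [truncF, truncG, hGsum]
  simp only [pow_zero] at key ⊢
  linarith
end

section
/- Let R be a commutative ring, M an n × m matrix over R, and p a prime ideal of R with residue field κ(p) (the fraction field of R/p). Then I_{k+1}(M) ⊆ p if and only if the matrix over κ(p) obtained by mapping each entry of M into κ(p) has rank at most k. -/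
open Matrix Submodule Module

lemma exists_inj_linearIndependent_of_le_finrank_span
    {K V : Type*} [Field K] [AddCommGroup V] [Module K V] {m r : ℕ}
    (v : Fin m → V) (h : r ≤ finrank K (span K (Set.range v))) :
    ∃ g : Fin r → Fin m, Function.Injective g ∧ LinearIndependent K (v ∘ g) := by
  obtain ⟨b, hbt, hspan, hli⟩ := exists_linearIndependent K (Set.range v)
  haveI : Fintype b := ((Set.finite_range v).subset hbt).fintype
  have hcard : finrank K (span K b) = b.toFinset.card := finrank_span_set_eq_card hli
  have hr : r ≤ Fintype.card b := by
    rw [← Set.toFinset_card, ← hcard, hspan]; exact h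
  obtain ⟨e⟩ : Nonempty (Fin r ↪ b) :=
    Function.Embedding.nonempty_of_card_le (by simpa using hr)
  have hw : LinearIndependent K (fun j : Fin r => (e j : V)) := hli.comp e e.injective
  have hmem : ∀ j : Fin r, ∃ i : Fin m, v i = (e j : V) := fun j => hbt (e j).2
  choose g hg using hmem
  refine ⟨g, ?_, ?_⟩
  · intro i j hij
    have : (e i : V) = (e j : V) := by rw [← hg, ← hg, hij]
    exact e.injective (Subtype.ext this)
  · have : v ∘ g = fun j : Fin r => (e j : V) := funext fun j => hg j
    rw [this]; exact hw

lemma rank_lt_iff_field {K : Type*} [Field K] {n m k : ℕ} (A : Matrix (Fin n) (Fin m) K) :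
    k + 1 ≤ A.rank ↔ ∃ (f : Fin (k+1) → Fin n) (g : Fin (k+1) → Fin m),
      Function.Injective f ∧ Function.Injective g ∧ (A.submatrix f g).det ≠ 0 := by
  constructor
  · intro h
    rw [rank_eq_finrank_span_cols] at h
    obtain ⟨g, hginj, hgli⟩ :=
      exists_inj_linearIndependent_of_le_finrank_span (fun j => Aᵀ j) h
    set B : Matrix (Fin n) (Fin (k+1)) K := A.submatrix id g with hB
    have hBT : (fun j => Bᵀ j) = (fun j => Aᵀ j) ∘ g := by
      funext j; ext i; rfl
    have hrankBT : Bᵀ.rank = k + 1 := by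
      have := (hBT ▸ hgli : LinearIndependent K (fun j => Bᵀ j)).rank_matrix (M := Bᵀ)
      simpa using this
    have hrankB : k + 1 ≤ finrank K (span K (Set.range B)) := by
      have h2 : Bᵀ.rank = finrank K (span K (Set.range B)) := by
        rw [rank_eq_finrank_span_cols]; rfl
      omega
    obtain ⟨f, hfinj, hfli⟩ :=
      exists_inj_linearIndependent_of_le_finrank_span (fun i => B i) hrankB
    refine ⟨f, g, hfinj, hginj, ?_⟩
    have hC : (fun i => (A.submatrix f g) i) = (fun i => B i) ∘ f := by
      funext i; ext j; rfl
    have hunit : IsUnit (A.submatrix f g) :=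
      linearIndependent_rows_iff_isUnit.mp (hC ▸ hfli : LinearIndependent K (fun i => (A.submatrix f g) i))
    exact ((isUnit_iff_isUnit_det _).mp hunit).ne_zero
  · rintro ⟨f, g, hf, hg, hdet⟩
    have hunit : IsUnit (A.submatrix f g) :=
      (isUnit_iff_isUnit_det _).mpr hdet.isUnit
    have hcols : LinearIndependent K (fun j => (A.submatrix f g)ᵀ j) :=
      linearIndependent_cols_iff_isUnit.mpr hunit
    have hcomp : (fun j => (A.submatrix f g)ᵀ j)
        = (LinearMap.funLeft K K f) ∘ ((fun j => Aᵀ j) ∘ g) := by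
      funext j; ext i; rfl
    have hli : LinearIndependent K ((fun j => Aᵀ j) ∘ g) :=
      LinearIndependent.of_comp _ (hcomp ▸ hcols)
    have h1 : finrank K (span K (Set.range ((fun j => Aᵀ j) ∘ g))) = k + 1 := by
      simpa using finrank_span_eq_card hli
    have h2 : span K (Set.range ((fun j => Aᵀ j) ∘ g)) ≤ span K (Set.range Aᵀ) :=
      span_mono (Set.range_comp_subset_range _ _)
    have h3 := Submodule.finrank_mono h2
    rw [rank_eq_finrank_span_cols]; change k + 1 ≤ finrank K (span K (Set.range Aᵀ))
    omega

/-- The ideal of `t × t` minors of a matrix, with the conventions that it is the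
unit ideal for `t ≤ 0` and the zero ideal when `t` exceeds the size of the matrix. -/
noncomputable def minorsIdeal {R : Type} [CommRing R] {n m : ℕ}
    (M : Matrix (Fin n) (Fin m) R) (t : ℤ) : Ideal R :=
  if t ≤ 0 then ⊤
  else Ideal.span {x | ∃ (f : Fin t.toNat → Fin n) (g : Fin t.toNat → Fin m),
    Function.Injective f ∧ Function.Injective g ∧ x = (M.submatrix f g).det}

/-- **Proposition.** Let `R` be a commutative ring, `M` an `n × m` matrix over `R`, and
`p` a prime ideal of `R` with residue field `κ(p)` (the fraction field of `R ⧸ p`).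
Then `I_{k+1}(M) ⊆ p` if and only if the matrix over `κ(p)` obtained by mapping each
entry of `M` into `κ(p)` has rank at most `k`. -/
theorem minorsIdeal_le_prime_iff_rank_le {R : Type} [CommRing R]
    {n m : ℕ} (M : Matrix (Fin n) (Fin m) R) (p : Ideal R) [p.IsPrime] (k : ℕ) :
    minorsIdeal M ((k : ℤ) + 1) ≤ p ↔
      (M.map ((algebraMap (R ⧸ p) (FractionRing (R ⧸ p))).comp
        (Ideal.Quotient.mk p))).rank ≤ k := by
  set φ := (algebraMap (R ⧸ p) (FractionRing (R ⧸ p))).comp (Ideal.Quotient.mk p) with hφ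
  have hker : ∀ x : R, φ x = 0 ↔ x ∈ p := by
    intro x
    rw [hφ, RingHom.comp_apply,
      map_eq_zero_iff _ (IsFractionRing.injective (R ⧸ p) (FractionRing (R ⧸ p))),
      Ideal.Quotient.eq_zero_iff_mem]
  have htoNat : ((k : ℤ) + 1).toNat = k + 1 := by omega
  rw [minorsIdeal, if_neg (by omega : ¬((k : ℤ) + 1 ≤ 0)), Ideal.span_le]
  have hA : ∀ (f : Fin (((k:ℤ)+1).toNat) → Fin n) (g : Fin (((k:ℤ)+1).toNat) → Fin m),
      (((M.map φ).submatrix f g).det = 0 ↔ (M.submatrix f g).det ∈ p) := by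
    intro f g
    rw [submatrix_map,
      show ((M.submatrix f g).map ⇑φ) = φ.mapMatrix (M.submatrix f g) from rfl,
      ← RingHom.map_det, hker]
  constructor
  · intro h
    by_contra hc
    have hlt : k + 1 ≤ (M.map φ).rank := by omega
    obtain ⟨f, g, hf, hg, hdet⟩ := (rank_lt_iff_field (M.map ⇑φ)).mp hlt
    refine hdet ?_
    have hmem : (M.submatrix (f ∘ (finCongr htoNat)) (g ∘ (finCongr htoNat))).det ∈ p := by
      apply h
      exact ⟨_, _, hf.comp (finCongr htoNat).injective, hg.comp (finCongr htoNat).injective, rfl⟩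
    have h0 := (hA _ _).mpr hmem
    have heq : (M.map ⇑φ).submatrix (f ∘ (finCongr htoNat)) (g ∘ (finCongr htoNat))
        = ((M.map ⇑φ).submatrix f g).submatrix (finCongr htoNat) (finCongr htoNat) := rfl
    rw [heq, det_submatrix_equiv_self] at h0
    exact h0
  · intro h x hx
    obtain ⟨f, g, hf, hg, rfl⟩ := hx
    rw [SetLike.mem_coe, ← hA f g]
    by_contra hdet
    have hge : k + 1 ≤ (M.map ⇑φ).rank := by
      apply (rank_lt_iff_field (M.map ⇑φ)).mpr
      refine ⟨f ∘ (finCongr htoNat.symm), g ∘ (finCongr htoNat.symm),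
        hf.comp (finCongr htoNat.symm).injective, hg.comp (finCongr htoNat.symm).injective, ?_⟩
      have heq : (M.map ⇑φ).submatrix (f ∘ (finCongr htoNat.symm)) (g ∘ (finCongr htoNat.symm))
          = ((M.map ⇑φ).submatrix f g).submatrix (finCongr htoNat.symm) (finCongr htoNat.symm) :=
        rfl
      rw [heq, det_submatrix_equiv_self]
      exact hdet
    omega
end
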